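/- arXiv:1703.09424 — 3 statements merged into one kernel-verified Lean document; each statement's English description precedes it below -/
import Mathlib

section
/- Let X₁, X₂, … be independent unit-rate exponential random variables and let γ ∈ (0,∞). With M_n = max_{1 ≤ i ≤ n} { i^γ X_i }, we have M_n / n^γ − β_n → G in distribution as n → ∞, where β_n = log(n/γ) − log log n and G is a standard Gumbel random variable; that is, for every x ∈ ℝ, P(M_n/n^γ − β_n ≤ x) → exp(−e^{−x}). -/
open MeasureTheory ProbabilityTheory Filter Real Asymptotics Topology Finset

/-!
By independence, `P(M_n ≤ a_n n^γ)` with `a_n = x + β_n` is the product of the factors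
`1 - exp (-(n/i)^γ a_n)`, `1 ≤ i ≤ n`. Each defect is at most `exp (-a_n) → 0`, so the product
behaves like `exp (-S_n)` with `S_n = ∑ exp (-(n/i)^γ a_n)`.

Write `(n/i)^γ = e^{γ t}` with `t = log (n/i) ≥ 0`. The bounds `1 + γ t ≤ e^{γ t}` and, for
`t ≤ Y`, `e^{γ t} ≤ 1 + γ e^{γ Y} t` squeeze each term of `S_n` between `e^{-a_n}` times powers
`(i/n)^{p a_n}`, whose sums are `n / (p a_n + 1) + O(1)` by comparison with `∫₀¹ s^q ds`.
Since `a_n ~ log n`, choosing `Y = a_n^{-1/2}` gives `S_n ~ n e^{-a_n} / (γ log n) = e^{-x}`.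
-/

lemma abs_log_one_sub_add_le {u : ℝ} (h0 : 0 ≤ u) (h2 : u ≤ 1 / 2) :
    |log (1 - u) + u| ≤ 2 * u ^ 2 := by
  have h := abs_log_sub_add_sum_range_le (x := u) (by rw [abs_of_nonneg h0]; linarith) 1
  simp only [sum_range_one, zero_add, pow_one, Nat.cast_zero, div_one, Nat.reduceAdd,
    abs_of_nonneg h0] at h
  rw [add_comm]
  refine h.trans ?_
  rw [div_le_iff₀ (by linarith)]
  nlinarith

theorem tendsto_prod_one_sub_of_tendsto_sum {α ι : Type*} {l : Filter α} {s : α → Finset ι}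
    {u : α → ι → ℝ} {ε : α → ℝ} {L : ℝ} (hε : Tendsto ε l (𝓝 0))
    (hu : ∀ᶠ k in l, ∀ i ∈ s k, 0 ≤ u k i ∧ u k i ≤ ε k)
    (hsum : Tendsto (fun k => ∑ i ∈ s k, u k i) l (𝓝 L)) :
    Tendsto (fun k => ∏ i ∈ s k, (1 - u k i)) l (𝓝 (exp (-L))) := by
  have hsmall : ∀ᶠ k in l, ∀ i ∈ s k, 0 ≤ u k i ∧ u k i ≤ 1 / 2 ∧ u k i ≤ ε k := by
    filter_upwards [hu, hε.eventually (eventually_le_nhds (by norm_num : (0 : ℝ) < 1 / 2))]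
      with k hk hεk i hi
    exact ⟨(hk i hi).1, (hk i hi).2.trans hεk, (hk i hi).2⟩
  have herr : Tendsto (fun k => ∑ i ∈ s k, (log (1 - u k i) + u k i)) l (𝓝 0) := by
    refine squeeze_zero_norm' ?_ (by simpa using (hε.mul hsum).const_mul 2)
    filter_upwards [hsmall] with k hk
    calc ‖∑ i ∈ s k, (log (1 - u k i) + u k i)‖
        ≤ ∑ i ∈ s k, |log (1 - u k i) + u k i| := norm_sum_le _ _
      _ ≤ ∑ i ∈ s k, 2 * (ε k * u k i) := by
        refine sum_le_sum fun i hi => (abs_log_one_sub_add_le (hk i hi).1 (hk i hi).2.1).trans ?_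
        nlinarith [hk i hi]
      _ = 2 * (ε k * ∑ i ∈ s k, u k i) := by rw [← mul_sum, ← mul_sum]
  have hlog : Tendsto (fun k => ∑ i ∈ s k, log (1 - u k i)) l (𝓝 (-L)) := by
    simpa [sum_add_distrib] using herr.sub hsum
  refine ((continuous_exp.tendsto _).comp hlog).congr' ?_
  filter_upwards [hsmall] with k hk
  rw [Function.comp_apply, exp_sum]
  exact prod_congr rfl fun i hi => exp_log (by linarith [hk i hi])

lemma exp_sub_one_le_mul_exp (s : ℝ) : exp s - 1 ≤ s * exp s := by
  have h := one_sub_le_exp_neg s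
  have : exp (-s) * exp s = 1 := by rw [← exp_add, neg_add_cancel, exp_zero]
  nlinarith [exp_pos s]

lemma exp_neg_mul_exp_le {a : ℝ} (ha : 0 ≤ a) (s : ℝ) :
    exp (-(a * exp s)) ≤ exp (-a) * exp (-(a * s)) := by
  rw [← exp_add, exp_le_exp]
  nlinarith [add_one_le_exp s]

lemma le_exp_neg_mul_exp {γ a t Y : ℝ} (hγ : 0 ≤ γ) (ha : 0 ≤ a) (ht : 0 ≤ t) :
    exp (-a) * (exp (-(γ * exp (γ * Y) * a * t)) - exp (-(γ * exp (γ * Y) * a * Y)))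
      ≤ exp (-(a * exp (γ * t))) := by
  set c := γ * exp (γ * Y)
  rcases le_or_gt t Y with htY | hYt
  · have hchord : exp (γ * t) ≤ 1 + c * t := by
      have h1 := exp_sub_one_le_mul_exp (γ * t)
      have h2 : exp (γ * t) ≤ exp (γ * Y) := exp_le_exp.2 (by nlinarith)
      nlinarith [mul_nonneg hγ ht]
    calc exp (-a) * (exp (-(c * a * t)) - exp (-(c * a * Y)))
        ≤ exp (-a) * exp (-(c * a * t)) := by
          gcongr; linarith [exp_pos (-(c * a * Y))]
      _ = exp (-(a * (1 + c * t))) := by rw [← exp_add]; ring_nf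
      _ ≤ exp (-(a * exp (γ * t))) := by gcongr
  · have hc : 0 ≤ c * a := by positivity
    have : exp (-(c * a * t)) ≤ exp (-(c * a * Y)) := exp_le_exp.2 (by nlinarith)
    calc exp (-a) * (exp (-(c * a * t)) - exp (-(c * a * Y))) ≤ 0 :=
          mul_nonpos_of_nonneg_of_nonpos (exp_pos _).le (by linarith)
      _ ≤ _ := (exp_pos _).le

lemma rpow_div_eq_exp_neg_mul_log {x y : ℝ} (hx : 0 < x) (hy : 0 < y) (p : ℝ) :
    (y / x) ^ p = exp (-(p * log (x / y))) := by
  rw [rpow_def_of_pos (div_pos hy hx), ← inv_div, log_inv]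
  ring_nf

lemma sum_Icc_one_eq_sum_range_succ {M : Type*} [AddCommMonoid M] (f : ℕ → M) (n : ℕ) :
    ∑ i ∈ Icc 1 n, f i = ∑ i ∈ range n, f (i + 1) := by
  rw [range_eq_Ico, sum_Ico_add', zero_add, Ico_add_one_right_eq_Icc]

lemma integral_div_rpow {n p : ℝ} (hn : 0 < n) (hp : 0 ≤ p) :
    ∫ s in (0 : ℝ)..n, (s / n) ^ p = n / (p + 1) := by
  rw [intervalIntegral.integral_comp_div (fun s => s ^ p) hn.ne', zero_div, div_self hn.ne',
    integral_rpow (Or.inl (by linarith)), zero_rpow (by linarith), one_rpow, smul_eq_mul]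
  ring

lemma monotoneOn_div_rpow {n p : ℝ} (hn : 0 < n) (hp : 0 ≤ p) :
    MonotoneOn (fun s : ℝ => (s / n) ^ p) (Set.Icc 0 n) := fun s hs t _ hst =>
  rpow_le_rpow (div_nonneg hs.1 hn.le) (by gcongr) hp

lemma le_sum_Icc_div_rpow {n : ℕ} (hn : n ≠ 0) {p : ℝ} (hp : 0 ≤ p) :
    n / (p + 1) ≤ ∑ i ∈ Icc 1 n, ((i : ℝ) / n) ^ p := by
  have hn' : (0 : ℝ) < n := by positivity
  have h := MonotoneOn.integral_le_sum_Ico (Nat.zero_le n)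
    (by simpa using monotoneOn_div_rpow hn' hp)
  rw [Nat.cast_zero, integral_div_rpow hn' hp] at h
  rwa [sum_Icc_one_eq_sum_range_succ, range_eq_Ico]

lemma sum_Icc_div_rpow_le {n : ℕ} (hn : n ≠ 0) {p : ℝ} (hp : 0 ≤ p) :
    ∑ i ∈ Icc 1 n, ((i : ℝ) / n) ^ p ≤ n / (p + 1) + 1 := by
  have hn' : (0 : ℝ) < n := by positivity
  have h := MonotoneOn.sum_le_integral_Ico (Nat.zero_le n)
    (by simpa using monotoneOn_div_rpow hn' hp)
  rw [Nat.cast_zero, integral_div_rpow hn' hp, ← range_eq_Ico] at h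
  have hshift := (sum_range_succ (fun i : ℕ => ((i : ℝ) / n) ^ p) n).symm.trans
    (sum_range_succ' (fun i : ℕ => ((i : ℝ) / n) ^ p) n)
  have h0 : 0 ≤ ((0 : ℕ) / (n : ℝ)) ^ p := by positivity
  rw [div_self hn'.ne', one_rpow] at hshift
  rw [sum_Icc_one_eq_sum_range_succ]
  push_cast at hshift h0 ⊢
  linarith

lemma sum_exp_neg_rpow_mul_le {γ a : ℝ} (hγ : 0 ≤ γ) (ha : 0 ≤ a) {n : ℕ} (hn : n ≠ 0) :
    ∑ i ∈ Icc 1 n, exp (-((n / i : ℝ) ^ γ * a)) ≤ exp (-a) * (n / (γ * a + 1) + 1) := by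
  calc ∑ i ∈ Icc 1 n, exp (-((n / i : ℝ) ^ γ * a))
      ≤ ∑ i ∈ Icc 1 n, exp (-a) * ((i : ℝ) / n) ^ (γ * a) := by
        refine sum_le_sum fun i hi => ?_
        have hi0 : (0 : ℝ) < i := by simp only [mem_Icc] at hi; exact_mod_cast hi.1
        have hn0 : (0 : ℝ) < n := by positivity
        rw [rpow_def_of_pos (div_pos hn0 hi0), rpow_div_eq_exp_neg_mul_log hn0 hi0]
        have h := exp_neg_mul_exp_le ha (γ * log (n / i))
        ring_nf at h ⊢
        exact h
    _ = exp (-a) * ∑ i ∈ Icc 1 n, ((i : ℝ) / n) ^ (γ * a) := (mul_sum ..).symm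
    _ ≤ exp (-a) * (n / (γ * a + 1) + 1) := by
        gcongr; exact sum_Icc_div_rpow_le hn (by positivity)

lemma le_sum_exp_neg_rpow_mul {γ a : ℝ} (hγ : 0 ≤ γ) (ha : 0 ≤ a) (Y : ℝ) {n : ℕ} (hn : n ≠ 0) :
    exp (-a) * n * (1 / (γ * exp (γ * Y) * a + 1) - exp (-(γ * exp (γ * Y) * a * Y)))
      ≤ ∑ i ∈ Icc 1 n, exp (-((n / i : ℝ) ^ γ * a)) := by
  set c := γ * exp (γ * Y)
  have hn0 : (0 : ℝ) < n := by positivity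
  calc exp (-a) * n * (1 / (c * a + 1) - exp (-(c * a * Y)))
      = exp (-a) * (n / (c * a + 1) - ∑ _i ∈ Icc 1 n, exp (-(c * a * Y))) := by
        rw [sum_const, Nat.card_Icc, add_tsub_cancel_right, nsmul_eq_mul]; ring
    _ ≤ exp (-a) * (∑ i ∈ Icc 1 n, ((i : ℝ) / n) ^ (c * a)
          - ∑ _i ∈ Icc 1 n, exp (-(c * a * Y))) := by
        gcongr; exact le_sum_Icc_div_rpow hn (by positivity)
    _ = ∑ i ∈ Icc 1 n, exp (-a) * (((i : ℝ) / n) ^ (c * a) - exp (-(c * a * Y))) := by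
        rw [← sum_sub_distrib, mul_sum]
    _ ≤ ∑ i ∈ Icc 1 n, exp (-((n / i : ℝ) ^ γ * a)) := by
        refine sum_le_sum fun i hi => ?_
        simp only [mem_Icc] at hi
        have hi0 : (0 : ℝ) < i := by exact_mod_cast hi.1
        have ht : 0 ≤ log (n / i : ℝ) :=
          log_nonneg ((one_le_div hi0).2 (by exact_mod_cast hi.2))
        rw [rpow_def_of_pos (div_pos hn0 hi0), rpow_div_eq_exp_neg_mul_log hn0 hi0]
        have h := le_exp_neg_mul_exp (Y := Y) hγ ha ht
        simp only [c]
        ring_nf at h ⊢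
        exact h

lemma tendsto_log_natCast_atTop : Tendsto (fun n : ℕ => log n) atTop atTop :=
  tendsto_log_atTop.comp tendsto_natCast_atTop_atTop

lemma tendsto_log_natCast_div_natCast : Tendsto (fun n : ℕ => log n / n) atTop (𝓝 0) :=
  isLittleO_log_id_atTop.tendsto_div_nhds_zero.comp tendsto_natCast_atTop_atTop

section

variable {a : ℕ → ℝ}

lemma tendsto_atTop_of_div_log_tendsto_one (ha : Tendsto (fun n => a n / log n) atTop (𝓝 1)) :
    Tendsto a atTop atTop := by
  refine (ha.pos_mul_atTop one_pos tendsto_log_natCast_atTop).congr' ?_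
  filter_upwards [tendsto_log_natCast_atTop.eventually_gt_atTop 0] with n hn
  exact div_mul_cancel₀ _ hn.ne'

lemma eventually_log_le_two_mul (ha : Tendsto (fun n => a n / log n) atTop (𝓝 1)) :
    ∀ᶠ n : ℕ in atTop, log n ≤ 2 * a n := by
  filter_upwards [ha.eventually (eventually_ge_nhds (by norm_num : (1 : ℝ) / 2 < 1)),
    tendsto_log_natCast_atTop.eventually_gt_atTop 0] with n hn hlog
  rw [le_div_iff₀ hlog] at hn
  linarith

lemma tendsto_log_div_mul_add_one (ha : Tendsto (fun n => a n / log n) atTop (𝓝 1)) {γ : ℝ}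
    (hγ : γ ≠ 0) {c : ℕ → ℝ} (hc : Tendsto c atTop (𝓝 γ)) :
    Tendsto (fun n : ℕ => γ * log n / (c n * a n + 1)) atTop (𝓝 1) := by
  have hden := (hc.mul ha).add tendsto_log_natCast_atTop.inv_tendsto_atTop
  rw [mul_one, add_zero] at hden
  have hlim : Tendsto (fun n : ℕ => γ / (c n * (a n / log n) + (log n)⁻¹)) atTop (𝓝 1) := by
    rw [← div_self hγ]
    exact tendsto_const_nhds.div hden hγ
  refine hlim.congr' ?_
  filter_upwards [tendsto_log_natCast_atTop.eventually_gt_atTop 0] with n hn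
  field_simp

lemma tendsto_log_mul_exp_neg_mul_sqrt (ha : Tendsto (fun n => a n / log n) atTop (𝓝 1))
    {γ : ℝ} (hγ : 0 < γ) :
    Tendsto (fun n : ℕ => log n *
      exp (-(γ * exp (γ * (√(a n))⁻¹) * a n * (√(a n))⁻¹))) atTop (𝓝 0) := by
  have hsqrt := tendsto_sqrt_atTop.comp (tendsto_atTop_of_div_log_tendsto_one ha)
  have hbound : Tendsto (fun n => 2 * (√(a n) ^ (2 : ℝ) * exp (-γ * √(a n)))) atTop (𝓝 0) := by
    simpa using ((tendsto_rpow_mul_exp_neg_mul_atTop_nhds_zero 2 γ hγ).comp hsqrt).const_mul 2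
  refine squeeze_zero' ?_ ?_ hbound
  · filter_upwards [tendsto_log_natCast_atTop.eventually_ge_atTop 0] with n hn
    positivity
  · filter_upwards [eventually_log_le_two_mul ha,
      (tendsto_atTop_of_div_log_tendsto_one ha).eventually_gt_atTop 0] with n hlog hpos
    have hexp : γ * √(a n) ≤ γ * exp (γ * (√(a n))⁻¹) * a n * (√(a n))⁻¹ := by
      rw [mul_assoc _ (a n), ← div_eq_mul_inv (a n), div_sqrt]
      have : 1 ≤ exp (γ * (√(a n))⁻¹) := one_le_exp (by positivity)
      nlinarith [mul_nonneg hγ.le (sqrt_nonneg (a n))]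
    rw [rpow_two, sq_sqrt hpos.le, neg_mul, ← mul_assoc]
    gcongr

theorem isEquivalent_sum_exp_neg_rpow_mul (ha : Tendsto (fun n => a n / log n) atTop (𝓝 1))
    {γ : ℝ} (hγ : 0 < γ) :
    (fun n : ℕ => ∑ i ∈ Icc 1 n, exp (-((n / i : ℝ) ^ γ * a n))) ~[atTop]
      fun n => n * exp (-a n) / (γ * log n) := by
  set Y : ℕ → ℝ := fun n => (√(a n))⁻¹
  set c : ℕ → ℝ := fun n => γ * exp (γ * Y n)
  have hc : Tendsto c atTop (𝓝 γ) := by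
    have hY : Tendsto Y atTop (𝓝 0) :=
      (tendsto_sqrt_atTop.comp (tendsto_atTop_of_div_log_tendsto_one ha)).inv_tendsto_atTop
    simpa using ((continuous_exp.tendsto _).comp (hY.const_mul γ)).const_mul γ
  have hlow : Tendsto (fun n : ℕ => γ * log n / (c n * a n + 1)
      - γ * (log n * exp (-(c n * a n * Y n)))) atTop (𝓝 1) := by
    simpa using (tendsto_log_div_mul_add_one ha hγ.ne' hc).sub
      ((tendsto_log_mul_exp_neg_mul_sqrt ha hγ).const_mul γ)
  have hup : Tendsto (fun n : ℕ => γ * log n / (γ * a n + 1) + γ * (log n / n)) atTop (𝓝 1) := by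
    simpa using (tendsto_log_div_mul_add_one ha hγ.ne' tendsto_const_nhds).add
      (tendsto_log_natCast_div_natCast.const_mul γ)
  have hpos : ∀ᶠ n : ℕ in atTop, 2 ≤ n ∧ 0 ≤ a n :=
    (eventually_ge_atTop 2).and ((tendsto_atTop_of_div_log_tendsto_one ha).eventually_ge_atTop 0)
  refine isEquivalent_of_tendsto_one (tendsto_of_tendsto_of_tendsto_of_le_of_le' hlow hup ?_ ?_)
  · filter_upwards [hpos] with n ⟨hn, ha0⟩
    have hlog : 0 < log n := log_pos (by exact_mod_cast hn)
    rw [Pi.div_apply, le_div_iff₀ (by positivity)]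
    calc _ = exp (-a n) * n * (1 / (c n * a n + 1) - exp (-(c n * a n * Y n))) := by
          field_simp
      _ ≤ _ := le_sum_exp_neg_rpow_mul hγ.le ha0 (Y n) (by omega)
  · filter_upwards [hpos] with n ⟨hn, ha0⟩
    have hlog : 0 < log n := log_pos (by exact_mod_cast hn)
    rw [Pi.div_apply, div_le_iff₀ (by positivity)]
    calc _ ≤ exp (-a n) * (n / (γ * a n + 1) + 1) :=
          sum_exp_neg_rpow_mul_le hγ.le ha0 (by omega)
      _ = _ := by field_simp

theorem tendsto_prod_one_sub_exp_neg_rpow_mul (ha : Tendsto (fun n => a n / log n) atTop (𝓝 1))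
    {γ : ℝ} (hγ : 0 < γ) {L : ℝ}
    (hL : Tendsto (fun n : ℕ => n * exp (-a n) / (γ * log n)) atTop (𝓝 L)) :
    Tendsto (fun n : ℕ => ∏ i ∈ Icc 1 n, (1 - exp (-((n / i : ℝ) ^ γ * a n)))) atTop
      (𝓝 (exp (-L))) := by
  have ha_top := tendsto_atTop_of_div_log_tendsto_one ha
  refine tendsto_prod_one_sub_of_tendsto_sum (tendsto_exp_neg_atTop_nhds_zero.comp ha_top) ?_
    ((isEquivalent_sum_exp_neg_rpow_mul ha hγ).tendsto_nhds_iff.2 hL)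
  filter_upwards [ha_top.eventually_ge_atTop 0] with n ha0 i hi
  simp only [mem_Icc] at hi
  have hi0 : (0 : ℝ) < i := by exact_mod_cast hi.1
  have hratio : 1 ≤ (n / i : ℝ) ^ γ :=
    one_le_rpow ((one_le_div hi0).2 (by exact_mod_cast hi.2)) hγ.le
  exact ⟨(exp_pos _).le, exp_le_exp.2 (neg_le_neg (le_mul_of_one_le_left ha0 hratio))⟩

end

lemma tendsto_centering_div_log (x : ℝ) {γ : ℝ} (hγ : γ ≠ 0) :
    Tendsto (fun n : ℕ => (x + (log (n / γ) - log (log n))) / log n) atTop (𝓝 1) := by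
  have hconst := (tendsto_const_nhds (x := x - log γ)).div_atTop tendsto_log_natCast_atTop
  have hloglog :=
    isLittleO_log_id_atTop.tendsto_div_nhds_zero.comp tendsto_log_natCast_atTop
  have hlim := (tendsto_const_nhds (x := (1 : ℝ))).add (hconst.sub hloglog)
  rw [sub_zero, add_zero] at hlim
  refine hlim.congr' ?_
  filter_upwards [eventually_ne_atTop 0, tendsto_log_natCast_atTop.eventually_gt_atTop 0]
    with n hn hlog
  rw [Function.comp_apply, id, log_div (by exact_mod_cast hn) hγ]
  field_simp
  ring

lemma natCast_mul_exp_neg_centering (x : ℝ) {γ : ℝ} (hγ : 0 < γ) {n : ℕ} (hn : 2 ≤ n) :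
    n * exp (-(x + (log (n / γ) - log (log n)))) / (γ * log n) = exp (-x) := by
  have hlog : 0 < log n := log_pos (by exact_mod_cast hn)
  have hn0 : (0 : ℝ) < n := by positivity
  rw [neg_add, neg_sub, exp_add, exp_sub, exp_log hlog, exp_log (div_pos hn0 hγ)]
  field_simp

lemma sSup_weighted_le_iff (γ : ℝ) (Z : ℕ → ℝ) {n : ℕ} (hn : 1 ≤ n) (b : ℝ) :
    sSup {y | ∃ i : ℕ, 1 ≤ i ∧ i ≤ n ∧ y = (i : ℝ) ^ γ * Z i} ≤ b * n ^ γ ↔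
      ∀ i ∈ Icc 1 n, Z i ≤ (n / i : ℝ) ^ γ * b := by
  have himage : {y | ∃ i : ℕ, 1 ≤ i ∧ i ≤ n ∧ y = (i : ℝ) ^ γ * Z i}
      = ↑((Icc 1 n).image fun i : ℕ => (i : ℝ) ^ γ * Z i) := by
    ext y; simp [eq_comm, and_assoc]
  have hne : ((Icc 1 n).image fun i : ℕ => (i : ℝ) ^ γ * Z i).Nonempty :=
    (nonempty_Icc.2 hn).image _
  rw [himage, hne.csSup_eq_max', max'_le_iff, forall_mem_image]
  refine forall₂_congr fun i hi => ?_
  have hi0 : (0 : ℝ) < i := by simp only [mem_Icc] at hi; exact_mod_cast hi.1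
  rw [div_rpow (by positivity) hi0.le, div_mul_eq_mul_div, le_div_iff₀' (rpow_pos_of_pos hi0 γ),
    mul_comm b]

lemma toReal_measure_biInter_le_eq_prod {Ω ι : Type*} [MeasurableSpace Ω] {μ : Measure Ω}
    {X : ι → Ω → ℝ} (hind : iIndepFun X μ)
    (hexp : ∀ i, ∀ x : ℝ, 0 ≤ x → μ {ω | X i ω ≤ x} = ENNReal.ofReal (1 - exp (-x)))
    (s : Finset ι) {c : ι → ℝ} (hc : ∀ i ∈ s, 0 ≤ c i) :
    (μ (⋂ i ∈ s, {ω | X i ω ≤ c i})).toReal = ∏ i ∈ s, (1 - exp (-c i)) := by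
  have hfac : ∀ i ∈ s, 0 ≤ 1 - exp (-c i) := fun i hi =>
    sub_nonneg.2 (exp_le_one_iff.2 (neg_nonpos.2 (hc i hi)))
  rw [hind.meas_biInter (s := fun i => {ω | X i ω ≤ c i})
      fun i _ => ⟨Set.Iic (c i), measurableSet_Iic, rfl⟩,
    prod_congr rfl fun i hi => hexp i (c i) (hc i hi), ← ENNReal.ofReal_prod_of_nonneg hfac,
    ENNReal.toReal_ofReal (prod_nonneg hfac)]

theorem weighted_exponential_max_gumbel_general
    {Ω : Type*} [MeasurableSpace Ω] (μ : Measure Ω)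
    (X : ℕ → Ω → ℝ)
    (hXindep : iIndepFun X μ)
    (hXexp : ∀ i, ∀ x : ℝ, 0 ≤ x →
      μ {ω | X i ω ≤ x} = ENNReal.ofReal (1 - Real.exp (-x)))
    (γ : ℝ) (hγ : 0 < γ)
    (M : ℕ → Ω → ℝ)
    (hM : ∀ n ω, M n ω = sSup {x | ∃ i : ℕ, 1 ≤ i ∧ i ≤ n ∧ x = (i : ℝ) ^ γ * X i ω})
    (β : ℕ → ℝ)
    (hβ : ∀ n, β n = Real.log ((n : ℝ) / γ) - Real.log (Real.log (n : ℝ))) :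
    ∀ x : ℝ,
      Tendsto
        (fun n : ℕ => (μ {ω | M n ω / (n : ℝ) ^ γ - β n ≤ x}).toReal)
        atTop
        (nhds (Real.exp (-Real.exp (-x)))) := by
  intro x
  obtain rfl : β = _ := funext hβ
  have ha := tendsto_centering_div_log x hγ.ne'
  have hD : Tendsto (fun n : ℕ => n * exp (-(x + (log (n / γ) - log (log n)))) / (γ * log n))
      atTop (𝓝 (exp (-x))) :=
    tendsto_const_nhds.congr' <| (eventually_ge_atTop 2).mono fun n hn =>
      (natCast_mul_exp_neg_centering x hγ hn).symm
  refine (tendsto_prod_one_sub_exp_neg_rpow_mul ha hγ hD).congr' ?_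
  filter_upwards [eventually_ge_atTop 1,
    (tendsto_atTop_of_div_log_tendsto_one ha).eventually_ge_atTop 0] with n hn ha0
  have hevent : {ω | M n ω / (n : ℝ) ^ γ - (log (n / γ) - log (log n)) ≤ x}
      = ⋂ i ∈ Icc 1 n, {ω | X i ω ≤ (n / i : ℝ) ^ γ * (x + (log (n / γ) - log (log n)))} := by
    ext ω
    simp only [Set.mem_ofPred_eq, Set.mem_iInter]
    rw [hM, sub_le_iff_le_add, div_le_iff₀ (by positivity), sSup_weighted_le_iff γ _ hn]
  rw [hevent, toReal_measure_biInter_le_eq_prod hXindep hXexp _ fun i hi => ?_]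
  have hi0 : (0 : ℝ) < i := by simp only [mem_Icc] at hi; exact_mod_cast hi.1
  positivity

/-- For i.i.d. unit exponentials `X_i` and `γ > 0`, with
`M_n = max_{1 ≤ i ≤ n} i^γ X_i` and `β_n = log(n/γ) - log log n`, the quantity
`M_n / n^γ - β_n` converges in distribution to a standard Gumbel random variable. -/
theorem weighted_exponential_max_gumbel
    {Ω : Type*} [MeasurableSpace Ω] (μ : Measure Ω) [IsProbabilityMeasure μ]
    (X : ℕ → Ω → ℝ)
    (hXmeas : ∀ i, Measurable (X i))
    (hXindep : iIndepFun X μ)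
    (hXexp : ∀ i, ∀ x : ℝ, 0 ≤ x →
      μ {ω | X i ω ≤ x} = ENNReal.ofReal (1 - Real.exp (-x)))
    (γ : ℝ) (hγ : 0 < γ)
    (M : ℕ → Ω → ℝ)
    (hM : ∀ n ω, M n ω = sSup {x | ∃ i : ℕ, 1 ≤ i ∧ i ≤ n ∧ x = (i : ℝ) ^ γ * X i ω})
    (β : ℕ → ℝ)
    (hβ : ∀ n, β n = Real.log ((n : ℝ) / γ) - Real.log (Real.log (n : ℝ))) :
    ∀ x : ℝ,
      Tendsto
        (fun n : ℕ => (μ {ω | M n ω / (n : ℝ) ^ γ - β n ≤ x}).toReal)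
        atTop
        (nhds (Real.exp (-Real.exp (-x)))) :=
  weighted_exponential_max_gumbel_general μ X hXindep hXexp γ hγ M hM β hβ
end

section
/- Let ℓ : (0,∞) → (0,∞) be slowly varying (regularly varying with index 0), eventually differentiable, and suppose t·ℓ'(t)/ℓ(t) = O(1/log t) as t → ∞. Then ℓ satisfies Condition L: for every function ε with ε(t) > 0 and ε(t) → 0 as t → ∞, log(t)·( ℓ((1+ε(t))t)/ℓ(t) − 1 ) → 0. -/
/-!
The hypothesis says that the logarithmic derivative of `ℓ` is `O(1 / (t log t))`, so by the mean
value theorem `log ℓ` moves by at most `C ε(t) / log t` on `[t, (1 + ε(t)) t]`. Since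
`|eˣ - 1| ≤ 2|x|` for `|x| ≤ 1`, this gives `log t · |ℓ((1 + ε(t)) t)/ℓ(t) - 1| ≤ 2 C ε(t) → 0`.
-/

open Filter Asymptotics Set

theorem abs_div_sub_one_le_two_mul_abs_log_sub {x y : ℝ} (hx : 0 < x) (hy : 0 < y)
    (h : |Real.log x - Real.log y| ≤ 1) : |x / y - 1| ≤ 2 * |Real.log x - Real.log y| := by
  have hexp : x / y = Real.exp (Real.log x - Real.log y) := by
    rw [Real.exp_sub, Real.exp_log hx, Real.exp_log hy]
  exact hexp ▸ Real.abs_exp_sub_one_le h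

theorem abs_log_comp_sub_le_of_abs_logDeriv_le {l : ℝ → ℝ} {a b K : ℝ} (hab : a ≤ b)
    (hpos : ∀ s ∈ Icc a b, 0 < l s) (hdiff : ∀ s ∈ Icc a b, DifferentiableAt ℝ l s)
    (hK : ∀ s ∈ Ico a b, |logDeriv l s| ≤ K) :
    |Real.log (l b) - Real.log (l a)| ≤ K * (b - a) :=
  norm_image_sub_le_of_norm_deriv_le_segment'
    (fun s hs => ((hdiff s hs).hasDerivAt.log (hpos s hs).ne').hasDerivWithinAt) hK
    b (right_mem_Icc.2 hab)

theorem exists_forall_ge_abs_logDeriv_le {l : ℝ → ℝ}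
    (h : (fun t : ℝ => t * deriv l t / l t) =O[atTop] fun t : ℝ => 1 / Real.log t) :
    ∃ C, ∀ᶠ t in atTop, ∀ s ≥ t, |logDeriv l s| ≤ C / (t * Real.log t) := by
  obtain ⟨C, hC, hbound⟩ := h.exists_pos
  refine ⟨C, ?_⟩
  filter_upwards [eventually_forall_ge_atTop.2 hbound.bound, eventually_gt_atTop 1]
    with t ht ht1 s hs
  have hlogt := Real.log_pos ht1
  have hlogs : Real.log t ≤ Real.log s := Real.log_le_log (by linarith) hs
  have hspos : 0 < s := by linarith
  have hlogspos : 0 < Real.log s := hlogt.trans_le hlogs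
  have hs' := ht s hs
  rw [Real.norm_eq_abs, Real.norm_eq_abs, mul_div_assoc, abs_mul, abs_of_pos hspos,
    abs_of_pos (one_div_pos.2 hlogspos), ← logDeriv_apply] at hs'
  calc |logDeriv l s| = s * |logDeriv l s| / s := by field_simp
    _ ≤ C * (1 / Real.log s) / s := by gcongr
    _ = C / (s * Real.log s) := by ring
    _ ≤ C / (t * Real.log t) := by gcongr

theorem log_mul_abs_div_sub_one_le {l : ℝ → ℝ} {t e C : ℝ} (ht : 1 < t) (he : 0 < e)
    (heC : C * e ≤ Real.log t) (hpos : ∀ s ≥ t, 0 < l s)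
    (hdiff : ∀ s ≥ t, DifferentiableAt ℝ l s)
    (hK : ∀ s ≥ t, |logDeriv l s| ≤ C / (t * Real.log t)) :
    Real.log t * |l ((1 + e) * t) / l t - 1| ≤ 2 * (C * e) := by
  have hlogt : 0 < Real.log t := Real.log_pos ht
  have htb : t ≤ (1 + e) * t := by nlinarith
  have hdist : |Real.log (l ((1 + e) * t)) - Real.log (l t)| ≤ C * e / Real.log t := by
    calc _ ≤ C / (t * Real.log t) * ((1 + e) * t - t) :=
          abs_log_comp_sub_le_of_abs_logDeriv_le htb (fun s hs => hpos s hs.1)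
            (fun s hs => hdiff s hs.1) (fun s hs => hK s hs.1)
      _ = C * e / Real.log t := by field_simp; ring
  have hdist_le_one : C * e / Real.log t ≤ 1 := (div_le_one hlogt).2 heC
  calc Real.log t * |l ((1 + e) * t) / l t - 1|
      ≤ Real.log t * (2 * (C * e / Real.log t)) := by
        gcongr
        exact (abs_div_sub_one_le_two_mul_abs_log_sub (hpos _ htb) (hpos t le_rfl)
          (hdist.trans hdist_le_one)).trans (by linarith)
    _ = 2 * (C * e) := by field_simp

theorem slowly_varying_derivative_condition_general
    (l : ℝ → ℝ)
    (hlpos : ∀ t : ℝ, 0 < t → 0 < l t)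
    (hldiff : ∃ t₀ : ℝ, ∀ t : ℝ, t₀ ≤ t → DifferentiableAt ℝ l t)
    (hlbigO : (fun t : ℝ => t * deriv l t / l t) =O[atTop]
      fun t : ℝ => 1 / Real.log t) :
    ∀ ε : ℝ → ℝ, (∀ t, 0 < ε t) → Tendsto ε atTop (nhds 0) →
      Tendsto (fun t : ℝ => Real.log t * (l ((1 + ε t) * t) / l t - 1))
        atTop (nhds 0) := by
  intro ε hεpos hε
  obtain ⟨t₀, hdiff⟩ := hldiff
  obtain ⟨C, hC⟩ := exists_forall_ge_abs_logDeriv_le hlbigO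
  have hCε : Tendsto (fun t => C * ε t) atTop (nhds 0) := by simpa using hε.const_mul C
  refine squeeze_zero_norm' ?_ (by simpa using hCε.const_mul 2)
  filter_upwards [hC, hCε.eventually (eventually_le_nhds one_pos), eventually_ge_atTop t₀,
    Real.tendsto_log_atTop.eventually_ge_atTop 1, eventually_gt_atTop 1]
    with t hKt hCεt ht₀ hlog ht1
  rw [Real.norm_eq_abs, abs_mul, abs_of_pos (Real.log_pos ht1)]
  exact log_mul_abs_div_sub_one_le ht1 (hεpos t) (hCεt.trans hlog)
    (fun s hs => hlpos s (by linarith)) (fun s hs => hdiff s (ht₀.trans hs)) hKt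

/-- A slowly varying, eventually differentiable function `ℓ` with
`t ℓ'(t)/ℓ(t) = O(1/log t)` satisfies Condition L. -/
theorem slowly_varying_derivative_condition
    (l : ℝ → ℝ)
    (hlpos : ∀ t : ℝ, 0 < t → 0 < l t)
    (hlmeas : Measurable l)
    (hlSV : ∀ u : ℝ, 0 < u →
      Tendsto (fun t : ℝ => l (u * t) / l t) atTop (nhds 1))
    (hldiff : ∃ t₀ : ℝ, ∀ t : ℝ, t₀ ≤ t → DifferentiableAt ℝ l t)
    (hlbigO : (fun t : ℝ => t * deriv l t / l t) =O[atTop]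
      fun t : ℝ => 1 / Real.log t) :
    ∀ ε : ℝ → ℝ, (∀ t, 0 < ε t) → Tendsto ε atTop (nhds 0) →
      Tendsto (fun t : ℝ => Real.log t * (l ((1 + ε t) * t) / l t - 1))
        atTop (nhds 0) :=
  slowly_varying_derivative_condition_general l hlpos hldiff hlbigO
end

section
/- Let ℓ : (0,∞) → (0,∞) satisfy Condition L: for every function ε with ε(t) > 0 and ε(t) → 0 as t → ∞, log(t)·( ℓ((1+ε(t))t)/ℓ(t) − 1 ) → 0. Then the following stronger uniform statement holds: for every function ε with ε(t) > 0 and ε(t) → 0 as t → ∞, log(t) · sup_{ −ε(t) ≤ x ≤ ε(t) } | ℓ((1+x)t)/ℓ(t) − 1 | → 0 as t → ∞. -/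
open Filter Topology

/-!
A positive increment `x` at `t` is controlled by Condition L directly. For a negative one put
`u = (1 + x) t`: then `t = (1 + η) u` with `η = -x / (1 + x) ≥ 0`, and the deviation at `(t, x)`
is an explicit function of the deviation at `(u, η)`, which tends to `0` as long as `η` can be
written as a function of `u`. Along a sequence on which `u` is strictly increasing this is the
case, and a subsequence argument recovers the limit along all `t`. So
`log t · (ℓ((1 + x(t)) t) / ℓ(t) - 1) → 0` for every `x → 0`, and applying this to a selector that
comes close to the supremum gives the uniform statement.
-/

noncomputable def logDev (l : ℝ → ℝ) (t x : ℝ) : ℝ :=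
  Real.log t * (l ((1 + x) * t) / l t - 1)

def ConditionL (l : ℝ → ℝ) : Prop :=
  ∀ ε : ℝ → ℝ, (∀ t, 0 < ε t) → Tendsto ε atTop (𝓝 0) →
    Tendsto (fun t => logDev l t (ε t)) atTop (𝓝 0)

theorem mul_sSup_image_of_nonneg {β : Type*} {c : ℝ} (hc : 0 ≤ c) (g : β → ℝ) (S : Set β) :
    c * sSup (g '' S) = sSup ((fun y => c * g y) '' S) := by
  rw [← smul_eq_mul, ← Real.sSup_smul_of_nonneg hc, ← Set.image_smul, Set.image_image]
  rfl

theorem tendsto_sSup_image_of_forall_selector {α β : Type*} {f : Filter α} {S : α → Set β}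
    {F : α → β → ℝ} (hF : ∀ a, ∀ y ∈ S a, 0 ≤ F a y) (hS : ∀ a, (S a).Nonempty)
    (h : ∀ x : α → β, (∀ a, x a ∈ S a) → Tendsto (fun a => F a (x a)) f (𝓝 0)) :
    Tendsto (fun a => sSup (F a '' S a)) f (𝓝 0) := by
  refine Metric.tendsto_nhds.2 fun δ hδ => ?_
  -- a selector that finds a value `≥ δ / 2` at every `a` where there is one
  have : ∀ a, ∃ x ∈ S a, (∃ y ∈ S a, δ / 2 ≤ F a y) → δ / 2 ≤ F a x := by
    intro a
    by_cases hlarge : ∃ y ∈ S a, δ / 2 ≤ F a y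
    · obtain ⟨y, hy, hFy⟩ := hlarge
      exact ⟨y, hy, fun _ => hFy⟩
    · obtain ⟨y, hy⟩ := hS a
      exact ⟨y, hy, fun h' => absurd h' hlarge⟩
  choose x hxS hx using this
  filter_upwards [(h x hxS).eventually (gt_mem_nhds (half_pos hδ))] with a ha
  have hsmall : ∀ y ∈ S a, F a y < δ / 2 := fun y hy =>
    lt_of_not_ge fun hFy => (hx a ⟨y, hy, hFy⟩).not_gt ha
  rw [Real.dist_eq, sub_zero, abs_of_nonneg (Real.sSup_nonneg (Set.forall_mem_image.2 (hF a)))]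
  calc sSup (F a '' S a) ≤ δ / 2 :=
        csSup_le ((hS a).image _) (Set.forall_mem_image.2 fun y hy => (hsmall y hy).le)
    _ < δ := half_lt_self hδ

section Extend

variable {α γ β : Type*} [LinearOrder α] [Nonempty α] [Preorder γ] [NoMaxOrder γ] [Zero β]
  {s : α → γ} {η : α → β}

theorem StrictMono.eventually_extend_zero (hs : StrictMono s) {P : β → Prop} (h0 : P 0)
    (hη : ∀ᶠ n in atTop, P (η n)) : ∀ᶠ r in atTop, P (Function.extend s η 0 r) := by
  obtain ⟨N, hN⟩ := eventually_atTop.1 hη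
  filter_upwards [eventually_gt_atTop (s N)] with r hr
  by_cases hr' : ∃ n, s n = r
  · obtain ⟨n, rfl⟩ := hr'
    rw [hs.injective.extend_apply]
    exact hN n (hs.lt_iff_lt.1 hr).le
  · rwa [Function.extend_apply' _ _ _ hr']

theorem StrictMono.tendsto_extend_zero [TopologicalSpace β] (hs : StrictMono s)
    (hη : Tendsto η atTop (𝓝 0)) : Tendsto (Function.extend s η 0) atTop (𝓝 0) :=
  fun _ hU => hs.eventually_extend_zero (mem_of_mem_nhds hU) (hη hU)

end Extend

theorem tendsto_log_div_log_mul {α : Type*} {f : Filter α} {a τ : α → ℝ}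
    (ha : Tendsto a f (𝓝 1)) (hτ : Tendsto τ f atTop) :
    Tendsto (fun n => Real.log (τ n) / Real.log (a n * τ n)) f (𝓝 1) := by
  have hlog : Tendsto (fun n => Real.log (a n * τ n)) f atTop :=
    Real.tendsto_log_atTop.comp (ha.pos_mul_atTop one_pos hτ)
  have hlog_a : Tendsto (fun n => Real.log (a n)) f (𝓝 0) := by
    have := (Real.continuousAt_log one_ne_zero).tendsto.comp ha
    rwa [Real.log_one] at this
  have hlim := (hlog_a.div_atTop hlog).const_sub 1
  rw [sub_zero] at hlim
  refine hlim.congr' ?_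
  filter_upwards [ha.eventually (lt_mem_nhds one_pos), hτ.eventually_gt_atTop 0,
    hlog.eventually_gt_atTop 0] with n han hτn hlogn
  rw [Real.log_mul han.ne' hτn.ne'] at hlogn ⊢
  field_simp
  ring

theorem logDev_zero {l : ℝ → ℝ} {t : ℝ} (ht : l t ≠ 0) : logDev l t 0 = 0 := by
  simp [logDev, ht]

theorem logDev_eq_of_mul_eq {l : ℝ → ℝ} {t u y η : ℝ} (hlt : l t ≠ 0) (hlu : l u ≠ 0)
    (hlog : Real.log u ≠ 0) (hy : (1 + y) * t = u) (hη : (1 + η) * u = t) :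
    logDev l t y = -(Real.log t / Real.log u) * logDev l u η / (1 + logDev l u η / Real.log u) := by
  simp only [logDev, hy, hη]
  rw [mul_div_cancel_left₀ _ hlog, add_sub_cancel]
  field_simp
  ring

namespace ConditionL

variable {l : ℝ → ℝ}

theorem tendsto_of_eventually_nonneg (hl : ConditionL l) (hlpos : ∀ t, 0 < t → 0 < l t)
    {ε : ℝ → ℝ} (hε : ∀ᶠ t in atTop, 0 ≤ ε t) (hε0 : Tendsto ε atTop (𝓝 0)) :
    Tendsto (fun t => logDev l t (ε t)) atTop (𝓝 0) := by
  set p : ℝ → ℝ := fun t => if 0 < ε t then ε t else Real.exp (-t) with hp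
  have hp_pos : ∀ t, 0 < p t := fun t => by
    simp only [hp]
    split_ifs with h
    exacts [h, Real.exp_pos _]
  have hp0 : Tendsto p atTop (𝓝 0) := by
    refine squeeze_zero_norm (fun t => ?_)
      (by simpa using hε0.abs.add Real.tendsto_exp_neg_atTop_nhds_zero)
    simp only [hp]
    split_ifs
    · exact le_add_of_nonneg_right (Real.exp_pos _).le
    · rw [Real.norm_of_nonneg (Real.exp_pos _).le]
      exact le_add_of_nonneg_left (abs_nonneg _)
  refine squeeze_zero_norm' ?_ (tendsto_zero_iff_norm_tendsto_zero.1 (hl p hp_pos hp0))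
  filter_upwards [hε, eventually_gt_atTop 0] with t hεt ht
  rcases hεt.lt_or_eq with h | h
  · simp [hp, h]
  · rw [← h, logDev_zero (hlpos t ht).ne', norm_zero]
    exact norm_nonneg _

theorem tendsto_seq_of_nonpos (hl : ConditionL l) (hlpos : ∀ t, 0 < t → 0 < l t)
    {τ z : ℕ → ℝ} (hτ : Tendsto τ atTop atTop) (hz : ∀ n, z n ≤ 0)
    (hz0 : Tendsto z atTop (𝓝 0)) (hmono : StrictMono fun n => (1 + z n) * τ n) :
    Tendsto (fun n => logDev l (τ n) (z n)) atTop (𝓝 0) := by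
  set u : ℕ → ℝ := fun n => (1 + z n) * τ n
  set η : ℕ → ℝ := fun n => -z n / (1 + z n) with hη_def
  have h1z : Tendsto (fun n => 1 + z n) atTop (𝓝 1) := by simpa using hz0.const_add 1
  have h1z_pos : ∀ᶠ n in atTop, 0 < 1 + z n := h1z.eventually (lt_mem_nhds one_pos)
  have hu : Tendsto u atTop atTop := h1z.pos_mul_atTop one_pos hτ
  have hη0 : Tendsto η atTop (𝓝 0) := by
    have := hz0.neg.div h1z one_ne_zero
    rwa [neg_zero, zero_div] at this
  have hη_nonneg : ∀ᶠ n in atTop, 0 ≤ η n :=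
    h1z_pos.mono fun n hn => div_nonneg (neg_nonneg.2 (hz n)) hn.le
  -- Condition L along a null function that takes the value `η n` at `u n`
  have ha : Tendsto (fun n => logDev l (u n) (η n)) atTop (𝓝 0) := by
    refine ((hl.tendsto_of_eventually_nonneg hlpos (hmono.eventually_extend_zero le_rfl hη_nonneg)
      (hmono.tendsto_extend_zero hη0)).comp hu).congr fun n => ?_
    simp [hmono.injective.extend_apply]
  have hlog_u : Tendsto (fun n => Real.log (u n)) atTop atTop := Real.tendsto_log_atTop.comp hu
  have hratio := tendsto_log_div_log_mul h1z hτ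
  have hlim := (hratio.neg.mul ha).div ((ha.div_atTop hlog_u).const_add 1) (by norm_num)
  rw [mul_zero, add_zero, zero_div] at hlim
  refine hlim.congr' ?_
  filter_upwards [h1z_pos, hτ.eventually_gt_atTop 0, hlog_u.eventually_gt_atTop 0]
    with n hzn hτn hlog
  refine (logDev_eq_of_mul_eq (hlpos _ hτn).ne' (hlpos _ (mul_pos hzn hτn)).ne' hlog.ne' rfl ?_).symm
  simp only [hη_def]
  field_simp
  ring

theorem tendsto_of_nonpos (hl : ConditionL l) (hlpos : ∀ t, 0 < t → 0 < l t) {y : ℝ → ℝ}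
    (hy : ∀ t, y t ≤ 0) (hy0 : Tendsto y atTop (𝓝 0)) :
    Tendsto (fun t => logDev l t (y t)) atTop (𝓝 0) := by
  refine tendsto_iff_seq_tendsto.2 fun t ht => tendsto_of_subseq_tendsto fun ns hns => ?_
  have htn : Tendsto (t ∘ ns) atTop atTop := ht.comp hns
  have hu : Tendsto (fun n => (1 + y (t (ns n))) * t (ns n)) atTop atTop :=
    (by simpa using (hy0.comp htn).const_add 1 : Tendsto (fun n => 1 + y (t (ns n))) atTop (𝓝 1)
      ).pos_mul_atTop one_pos htn
  obtain ⟨φ, hφ, hmono⟩ := strictMono_subseq_of_tendsto_atTop hu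
  have htφ : Tendsto (t ∘ ns ∘ φ) atTop atTop := htn.comp hφ.tendsto_atTop
  exact ⟨φ, hl.tendsto_seq_of_nonpos hlpos htφ (fun _ => hy _) (hy0.comp htφ) hmono⟩

theorem tendsto (hl : ConditionL l) (hlpos : ∀ t, 0 < t → 0 < l t) {x : ℝ → ℝ}
    (hx : Tendsto x atTop (𝓝 0)) : Tendsto (fun t => logDev l t (x t)) atTop (𝓝 0) := by
  have hpos := hl.tendsto_of_eventually_nonneg hlpos (.of_forall fun t => le_max_right (x t) 0)
    (by simpa using hx.max (tendsto_const_nhds (x := (0 : ℝ))))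
  have hneg := hl.tendsto_of_nonpos hlpos (fun t => min_le_right (x t) 0)
    (by simpa using hx.min (tendsto_const_nhds (x := (0 : ℝ))))
  have hsum := hpos.add hneg
  rw [add_zero] at hsum
  refine hsum.congr' ?_
  filter_upwards [eventually_gt_atTop 0] with t ht
  rcases le_total (x t) 0 with h | h <;> simp [h, logDev_zero (hlpos t ht).ne']

end ConditionL

/-- Condition L implies its uniform version: if for every positive
function `ε(t) → 0` one has `log t · (ℓ((1+ε(t))t)/ℓ(t) - 1) → 0`, then also
`log t · sup_{|x| ≤ ε(t)} |ℓ((1+x)t)/ℓ(t) - 1| → 0`. -/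
theorem condition_L_uniform
    (l : ℝ → ℝ)
    (hlpos : ∀ t : ℝ, 0 < t → 0 < l t)
    (hCondL : ∀ ε : ℝ → ℝ, (∀ t, 0 < ε t) → Tendsto ε atTop (nhds 0) →
      Tendsto (fun t : ℝ => Real.log t * (l ((1 + ε t) * t) / l t - 1))
        atTop (nhds 0)) :
    ∀ ε : ℝ → ℝ, (∀ t, 0 < ε t) → Tendsto ε atTop (nhds 0) →
      Tendsto
        (fun t : ℝ =>
          Real.log t *
            sSup ((fun x : ℝ => |l ((1 + x) * t) / l t - 1|) ''
              Set.Icc (-(ε t)) (ε t)))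
        atTop (nhds 0) := by
  intro ε hεpos hε0
  have hsup := tendsto_sSup_image_of_forall_selector (S := fun t => Set.Icc (-(ε t)) (ε t))
    (F := fun t x => |logDev l t x|) (fun _ _ _ => abs_nonneg _)
    (fun t => Set.nonempty_Icc.2 (neg_le_self (hεpos t).le)) fun x hx => by
      have hx0 : Tendsto x atTop (𝓝 0) := squeeze_zero_norm (fun t => abs_le.2 (hx t)) hε0
      simpa using (ConditionL.tendsto hCondL hlpos hx0).abs
  refine hsup.congr' ?_
  filter_upwards [eventually_ge_atTop 1] with t ht
  rw [mul_sSup_image_of_nonneg (Real.log_nonneg ht)]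
  simp only [logDev, abs_mul, abs_of_nonneg (Real.log_nonneg ht)]
end
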